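/- arXiv:2604.09477 — 4 statements merged into one kernel-verified Lean document; each statement's English description precedes it below -/
import Mathlib

section
/- Let d = mJ with d odd, a, f ∈ ℓ²(Z_d), and fix j ∈ Z_J. Define y_ℓ = S_m(a^{*ℓ} * f) (the subsampled ℓ-th convolution power applied to f) and s_ℓ(j) = DFT_J(y_ℓ)(j). Let r_j be the number of distinct values among {DFT_d(a)(j + nJ) : n = 0,…,m−1}. Then for any K ≥ r_j with 2K ≤ L, the Hankel matrix H_K(j) = [s_{p+q}(j)]_{p,q=0}^{K−1} satisfies rank(H_K(j)) ≤ r_j. -/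
open Finset

/-- Normalized DFT on `Z_d`. -/
noncomputable def dft (d : ℕ) (z : ZMod d → ℂ) (k : ZMod d) : ℂ :=
  (1 / d) * ∑ t ∈ Finset.range d,
    z t * Complex.exp (-2 * Real.pi * Complex.I * (k.val * t) / d)

/-- Circular convolution on `Z_d`. -/
noncomputable def cconv (d : ℕ) (a f : ZMod d → ℂ) (k : ZMod d) : ℂ :=
  ∑ t ∈ Finset.range d, a t * f (k - t)

/-- `K×K` Hankel matrix of a sequence. -/
noncomputable def hankel (K : ℕ) (s : ℕ → ℂ) : Matrix (Fin K) (Fin K) ℂ :=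
  fun p q => s (p.val + q.val)

/-!
The characters `χₖ = stdAddChar (k * ·)` of `ZMod d` are eigenvectors of convolution by `a`, with
eigenvalue the unnormalised transform `𝓕 a k`. Expanding `f` in them gives
`A^ℓ f = ∑ₖ dft f k • (𝓕 a k)^ℓ • χₖ`, and subsampling by `m` followed by `DFT_J` keeps exactly
the frequencies `k ≡ j (mod J)`, so `s_ℓ(j) = ∑_{n<m} cₙ μₙ^ℓ` with `μₙ = 𝓕 a (j + nJ)`.
Grouping equal `μₙ`, the Hankel matrix of such a sequence factors through the `K × r` Vandermonde
matrix of the `r` distinct values, so its rank is at most `r`.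
-/

theorem Module.End.pow_apply_of_apply_eq_smul {R M : Type*} [CommSemiring R] [AddCommMonoid M]
    [Module R M] {f : Module.End R M} {μ : R} {v : M} (h : f v = μ • v) (n : ℕ) :
    (f ^ n) v = μ ^ n • v := by
  induction n with
  | zero => simp
  | succ n ih => rw [pow_succ', Module.End.mul_apply, ih, map_smul, h, smul_smul, pow_succ]

theorem sum_mul_pow_eq_sum_image {ι R : Type*} [CommSemiring R] [DecidableEq R]
    (S : Finset ι) (c μ : ι → R) (ℓ : ℕ) :
    ∑ i ∈ S, c i * μ i ^ ℓ = ∑ v ∈ S.image μ, (∑ i ∈ S with μ i = v, c i) * v ^ ℓ := by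
  rw [← sum_fiberwise_of_maps_to (fun i hi => mem_image_of_mem μ hi)]
  refine sum_congr rfl fun v _ => ?_
  rw [sum_mul]
  exact sum_congr rfl fun i hi => by rw [(mem_filter.mp hi).2]

theorem rank_hankel_sum_mul_pow_le {ι : Type*} (S : Finset ι) (c μ : ι → ℂ) (K : ℕ) :
    (hankel K fun ℓ => ∑ i ∈ S, c i * μ i ^ ℓ).rank ≤ (S.image μ).card := by
  set T := S.image μ
  let V : Matrix (Fin K) T ℂ := fun p v => (v : ℂ) ^ (p : ℕ)
  let W : Matrix T (Fin K) ℂ := fun v q => (∑ i ∈ S with μ i = v, c i) * (v : ℂ) ^ (q : ℕ)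
  have hVW : hankel K (fun ℓ => ∑ i ∈ S, c i * μ i ^ ℓ) = V * W := by
    ext p q
    rw [hankel, sum_mul_pow_eq_sum_image, Matrix.mul_apply, ← sum_coe_sort T]
    exact sum_congr rfl fun v _ => by ring
  rw [hVW]
  calc (V * W).rank ≤ V.rank := Matrix.rank_mul_le_left V W
    _ ≤ Fintype.card T := Matrix.rank_le_card_width V
    _ = T.card := Fintype.card_coe T

open scoped ZMod
open ZMod (stdAddChar)

theorem dft_sum_mul {ι : Type*} (d : ℕ) (s : Finset ι) (c : ι → ℂ) (g : ι → ZMod d → ℂ)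
    (j : ZMod d) : dft d (fun t => ∑ i ∈ s, c i * g i t) j = ∑ i ∈ s, c i * dft d (g i) j := by
  simp only [dft, sum_mul, mul_sum]
  rw [sum_comm]
  exact sum_congr rfl fun _ _ => sum_congr rfl fun _ _ => by ring

noncomputable def cconvEnd (d : ℕ) (a : ZMod d → ℂ) : Module.End ℂ (ZMod d → ℂ) where
  toFun := cconv d a
  map_add' f g := by ext k; simp only [cconv, Pi.add_apply, mul_add, sum_add_distrib]
  map_smul' c f := by
    ext k
    simp only [cconv, Pi.smul_apply, smul_eq_mul, RingHom.id_apply, mul_sum]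
    exact sum_congr rfl fun _ _ => by ring

section Fourier
variable {d : ℕ} [NeZero d]

theorem sum_range_natCast_eq_sum_zmod {M : Type*} [AddCommMonoid M] (g : ZMod d → M) :
    ∑ t ∈ range d, g t = ∑ t : ZMod d, g t :=
  sum_nbij' (fun t => (t : ZMod d)) ZMod.val (by simp) (fun t _ => mem_range.mpr t.val_lt)
    (fun t ht => ZMod.val_natCast_of_lt (mem_range.mp ht)) (fun t _ => ZMod.natCast_zmod_val t)
    (fun _ _ => rfl)

theorem exp_neg_mul_eq_stdAddChar (k : ZMod d) (t : ℕ) :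
    Complex.exp (-2 * Real.pi * Complex.I * (k.val * t) / d) =
      stdAddChar (-(k * (t : ZMod d))) := by
  have h := ZMod.stdAddChar_coe (N := d) (-(k.val * t : ℤ))
  push_cast [ZMod.natCast_zmod_val] at h
  rw [h]
  congr 1
  ring

theorem dft_eq_inv_mul_fourier (z : ZMod d → ℂ) (k : ZMod d) :
    dft d z k = (d : ℂ)⁻¹ * 𝓕 z k := by
  rw [dft, one_div, ZMod.dft_apply]
  congr 1
  simp_rw [exp_neg_mul_eq_stdAddChar, smul_eq_mul]
  rw [sum_range_natCast_eq_sum_zmod (fun t => z t * stdAddChar (-(k * t)))]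
  exact sum_congr rfl fun t _ => by rw [mul_comm, mul_comm k]

theorem eq_sum_dft_mul_stdAddChar (z : ZMod d → ℂ) (t : ZMod d) :
    z t = ∑ k : ZMod d, dft d z k * stdAddChar (k * t) := by
  conv_lhs => rw [← (ZMod.dft (N := d) (E := ℂ)).symm_apply_apply z]
  rw [ZMod.invDFT_apply, smul_eq_mul, mul_sum]
  refine sum_congr rfl fun k _ => ?_
  rw [dft_eq_inv_mul_fourier, smul_eq_mul]
  ring

theorem cconv_stdAddChar (a : ZMod d → ℂ) (k : ZMod d) :
    cconv d a (fun t => stdAddChar (k * t)) = 𝓕 a k • fun t => stdAddChar (k * t) := by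
  ext t
  rw [cconv, sum_range_natCast_eq_sum_zmod (fun s => a s * stdAddChar (k * (t - s))),
    Pi.smul_apply, ZMod.dft_apply, smul_eq_mul, sum_mul]
  refine sum_congr rfl fun s _ => ?_
  rw [mul_sub, sub_eq_add_neg, AddChar.map_add_eq_mul, smul_eq_mul, mul_comm s k]
  ring

theorem cconv_iterate_apply (a f : ZMod d → ℂ) (ℓ : ℕ) (t : ZMod d) :
    (cconv d a)^[ℓ] f t = ∑ k : ZMod d, dft d f k * 𝓕 a k ^ ℓ * stdAddChar (k * t) := by
  have hf : f = ∑ k : ZMod d, dft d f k • fun t => stdAddChar (k * t) := by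
    ext t
    rw [eq_sum_dft_mul_stdAddChar f t, Finset.sum_apply]
    rfl
  have hcoe : ⇑(cconvEnd d a) = cconv d a := rfl
  rw [← hcoe, ← Module.End.pow_apply]
  conv_lhs => rw [hf]
  rw [map_sum, Finset.sum_apply]
  refine sum_congr rfl fun k _ => ?_
  rw [map_smul, Module.End.pow_apply_of_apply_eq_smul (cconv_stdAddChar a k)]
  simp only [Pi.smul_apply, smul_eq_mul]
  ring

theorem dft_stdAddChar (κ j : ZMod d) :
    dft d (fun t => stdAddChar (κ * t)) j = if κ = j then 1 else 0 := by
  have hd : (d : ℂ) ≠ 0 := NeZero.ne _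
  rw [dft_eq_inv_mul_fourier, ZMod.dft_apply]
  simp_rw [smul_eq_mul, ← AddChar.map_add_eq_mul]
  have hsum := AddChar.sum_mulShift (κ - j) (ZMod.isPrimitive_stdAddChar d)
  rw [sum_congr rfl fun t _ => congrArg stdAddChar (show -(t * j) + κ * t = t * (κ - j) by ring),
    hsum, ZMod.card]
  simp only [sub_eq_zero]
  split_ifs <;> simp [hd]

end Fourier

theorem stdAddChar_mul_natCast_mul (m J : ℕ) [NeZero m] [NeZero J] (k : ZMod (m * J))
    (t : ZMod J) :
    stdAddChar (k * ((m * t.val : ℕ) : ZMod (m * J))) = stdAddChar ((k.cast : ZMod J) * t) := by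
  have hl : k * ((m * t.val : ℕ) : ZMod (m * J)) = ((k.val * (m * t.val) : ℕ) : ℤ) := by
    push_cast [ZMod.natCast_zmod_val]; rfl
  have hr : (k.cast : ZMod J) * t = ((k.val * t.val : ℕ) : ℤ) := by
    push_cast [ZMod.cast_eq_val, ZMod.natCast_zmod_val]; rfl
  rw [hl, hr, ZMod.stdAddChar_coe, ZMod.stdAddChar_coe]
  congr 1
  have hm : (m : ℂ) ≠ 0 := NeZero.ne _
  push_cast
  field_simp

theorem natCast_eq_iff_eq_val {J r : ℕ} [NeZero J] (hr : r < J) (j : ZMod J) :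
    (r : ZMod J) = j ↔ r = j.val :=
  ⟨fun h => by rw [← h, ZMod.val_natCast_of_lt hr], fun h => by rw [h, ZMod.natCast_zmod_val]⟩

theorem sum_range_mul_ite_natCast_eq {M : Type*} [AddCommMonoid M] (m J : ℕ) [NeZero J]
    (h : ℕ → M) (j : ZMod J) :
    ∑ k ∈ range (m * J), (if (k : ZMod J) = j then h k else 0)
      = ∑ n ∈ range m, h (j.val + n * J) := by
  induction m with
  | zero => simp
  | succ m ih =>
    rw [Nat.succ_mul, sum_range_add, ih, sum_range_succ]
    congr 1
    have hcast : ∀ r, ((m * J + r : ℕ) : ZMod J) = r := by simp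
    simp_rw [hcast]
    rw [sum_congr rfl fun r hr => if_congr (natCast_eq_iff_eq_val (mem_range.mp hr) j) rfl rfl,
      sum_ite_eq' (range J) j.val, if_pos (mem_range.mpr j.val_lt), add_comm]

theorem sum_zmod_ite_cast_eq {M : Type*} [AddCommMonoid M] (m J : ℕ) [NeZero m] [NeZero J]
    (g : ZMod (m * J) → M) (j : ZMod J) :
    ∑ k : ZMod (m * J), (if (k.cast : ZMod J) = j then g k else 0)
      = ∑ n ∈ range m, g ((j.val + n * J : ℕ) : ZMod (m * J)) := by
  rw [← sum_range_natCast_eq_sum_zmod (fun k => if (k.cast : ZMod J) = j then g k else 0)]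
  simp_rw [ZMod.cast_natCast (dvd_mul_left J m)]
  exact sum_range_mul_ite_natCast_eq m J (fun k => g k) j

theorem dft_subsample_cconv_iterate (m J : ℕ) [NeZero m] [NeZero J]
    (a f : ZMod (m * J) → ℂ) (j : ZMod J) (ℓ : ℕ) :
    dft J (fun t : ZMod J => (cconv (m * J) a)^[ℓ] f ((m * t.val : ℕ) : ZMod (m * J))) j
      = ∑ n ∈ range m, dft (m * J) f ((j.val + n * J : ℕ) : ZMod (m * J))
          * 𝓕 a ((j.val + n * J : ℕ) : ZMod (m * J)) ^ ℓ := by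
  simp_rw [cconv_iterate_apply, stdAddChar_mul_natCast_mul]
  rw [dft_sum_mul]
  simp_rw [dft_stdAddChar, mul_ite, mul_one, mul_zero]
  exact sum_zmod_ite_cast_eq m J _ j

theorem rank_dynamical_hankel_le_general (m J : ℕ) (hodd : Odd (m * J))
    (a f : ZMod (m * J) → ℂ) (j : ZMod J) (K : ℕ) :
    (hankel K (fun ℓ =>
        dft J (fun j' : ZMod J =>
          ((cconv (m * J) a)^[ℓ] f) ((m * j'.val : ℕ) : ZMod (m * J))) j)).rank
      ≤ (Finset.image (fun n => dft (m * J) a ((j.val + n * J : ℕ) : ZMod (m * J)))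
            (Finset.range m)).card := by
  have : NeZero m := ⟨left_ne_zero_of_mul hodd.pos.ne'⟩
  have : NeZero J := ⟨right_ne_zero_of_mul hodd.pos.ne'⟩
  set idx : ℕ → ZMod (m * J) := fun n => ((j.val + n * J : ℕ) : ZMod (m * J))
  have hfourier : 𝓕 a = fun k => ((m * J : ℕ) : ℂ) * dft (m * J) a k := by
    ext k
    rw [dft_eq_inv_mul_fourier, mul_inv_cancel_left₀ (NeZero.ne _)]
  simp_rw [dft_subsample_cconv_iterate]
  calc _ ≤ ((range m).image fun n => 𝓕 a (idx n)).card := rank_hankel_sum_mul_pow_le _ _ _ K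
    _ = (((range m).image fun n => dft (m * J) a (idx n)).image
          fun x => ((m * J : ℕ) : ℂ) * x).card := by rw [image_image, hfourier]; rfl
    _ ≤ _ := card_image_le

/-- Low-rank dynamical Hankel matrices: with `d = mJ` odd, `y_ℓ = S_m(A^ℓ f)`,
`s_ℓ(j) = DFT_J(y_ℓ)(j)`, and `r_j` the number of distinct values among
`{DFT_d(a)(j+nJ)}_{n=0}^{m-1}`, for any `K ≥ r_j` with `2K ≤ L` one has
`rank H_K(j) ≤ r_j`. -/
theorem rank_dynamical_hankel_le (m J : ℕ) (hodd : Odd (m * J))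
    (a f : ZMod (m * J) → ℂ) (j : ZMod J) (K L : ℕ)
    (hK : (Finset.image (fun n => dft (m * J) a ((j.val + n * J : ℕ) : ZMod (m * J)))
            (Finset.range m)).card ≤ K)
    (hL : 2 * K ≤ L) :
    (hankel K (fun ℓ =>
        dft J (fun j' : ZMod J =>
          ((cconv (m * J) a)^[ℓ] f) ((m * j'.val : ℕ) : ZMod (m * J))) j)).rank
      ≤ (Finset.image (fun n => dft (m * J) a ((j.val + n * J : ℕ) : ZMod (m * J)))
            (Finset.range m)).card :=
  rank_dynamical_hankel_le_general m J hodd a f j K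
end

section
/- Let d = mJ be odd with m odd, and suppose â : Z_d → ℝ is real symmetric (â(k) = â(d−k)) and strictly decreasing on {0, 1, …, (d−1)/2}. Then the number r_j of distinct values among {â(j + nJ) : n = 0,…,m−1} satisfies r_0 = (m+1)/2 and r_j = m for every j with 1 ≤ j ≤ J−1. -/
open Finset

/-- If `d = mJ` is odd with `m` odd, and `â : Z_d → ℝ` is real symmetric
(`â(k) = â(d-k)`) and strictly decreasing on `{0,…,(d-1)/2}`, then the number
of distinct values among `{â(j+nJ)}_{n=0}^{m-1}` is `(m+1)/2` for `j = 0`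
and `m` for every `1 ≤ j ≤ J-1`. -/
theorem aliased_spectrum_card (m J : ℕ) (hm : Odd m) (hodd : Odd (m * J)) (hJ : 1 ≤ J)
    (ah : ZMod (m * J) → ℝ) (hsym : ∀ k : ZMod (m * J), ah k = ah (-k))
    (hdec : ∀ k₁ k₂ : ℕ, k₁ < k₂ → k₂ ≤ (m * J - 1) / 2 →
      ah (k₂ : ZMod (m * J)) < ah (k₁ : ZMod (m * J))) :
    (Finset.image (fun n => ah ((n * J : ℕ) : ZMod (m * J))) (Finset.range m)).card
        = (m + 1) / 2 ∧
      ∀ j : ℕ, 1 ≤ j → j ≤ J - 1 →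
        (Finset.image (fun n => ah ((j + n * J : ℕ) : ZMod (m * J)))
            (Finset.range m)).card = m := by
  have hJodd : Odd J := (Nat.odd_mul.mp hodd).2
  obtain ⟨s, hs⟩ := hm
  obtain ⟨u, hu⟩ := hJodd
  obtain ⟨t, ht⟩ := hodd
  have hmpos : 0 < m := by omega
  -- injectivity of ah on representatives
  have hinj : ∀ a b : ℕ, a ≤ (m * J - 1) / 2 → b ≤ (m * J - 1) / 2 →
      ah (a : ZMod (m * J)) = ah (b : ZMod (m * J)) → a = b := by
    intro a b ha hb hab
    rcases lt_trichotomy a b with h | h | h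
    · exact absurd hab (ne_of_gt (hdec a b h hb))
    · exact h
    · exact absurd hab (ne_of_lt (hdec b a h ha))
  -- symmetry on natural casts
  have hsym' : ∀ x : ℕ, x ≤ m * J →
      ah ((x : ℕ) : ZMod (m * J)) = ah (((m * J - x : ℕ)) : ZMod (m * J)) := by
    intro x hx
    rw [Nat.cast_sub hx, ZMod.natCast_self, zero_sub]
    exact hsym _
  -- reduction to a representative ≤ (d-1)/2
  have hreduce : ∀ x : ℕ, x < m * J → ∃ y, y ≤ (m * J - 1) / 2 ∧
      ah ((x : ℕ) : ZMod (m * J)) = ah ((y : ℕ) : ZMod (m * J)) ∧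
      (y = x ∨ x + y = m * J) := by
    intro x hx
    by_cases h : x ≤ (m * J - 1) / 2
    · exact ⟨x, h, rfl, Or.inl rfl⟩
    · exact ⟨m * J - x, by omega, hsym' x hx.le, Or.inr (by omega)⟩
  constructor
  · -- j = 0 case
    have himg : Finset.image (fun n => ah ((n * J : ℕ) : ZMod (m * J))) (Finset.range m)
        = Finset.image (fun n => ah ((n * J : ℕ) : ZMod (m * J)))
            (Finset.range ((m + 1) / 2)) := by
      apply Finset.Subset.antisymm
      · rw [Finset.image_subset_iff]
        intro n hn
        rw [Finset.mem_range] at hn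
        by_cases h : n < (m + 1) / 2
        · exact Finset.mem_image_of_mem _ (Finset.mem_range.mpr h)
        · have hval : ah ((n * J : ℕ) : ZMod (m * J))
              = ah (((m - n) * J : ℕ) : ZMod (m * J)) := by
            have h1 : n * J ≤ m * J := Nat.mul_le_mul_right J (by omega)
            have h2 : (m - n) * J = m * J - n * J := Nat.sub_mul m n J
            rw [hsym' (n * J) h1, h2]
          rw [hval]
          exact Finset.mem_image_of_mem _ (Finset.mem_range.mpr (by omega))
      · exact Finset.image_subset_image (Finset.range_subset_range.mpr (by omega))
    rw [himg, Finset.card_image_of_injOn, Finset.card_range]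
    intro a ha b hb hab
    simp only [Finset.coe_range, Set.mem_Iio] at ha hb
    have hbnd : ∀ c : ℕ, c < (m + 1) / 2 → c * J ≤ (m * J - 1) / 2 := by
      intro c hc
      have h1 : (2 * c) * J ≤ (2 * s) * J := Nat.mul_le_mul_right J (by omega)
      have h2 : (2 * c) * J = 2 * (c * J) := by ring
      have h3 : m * J = (2 * s) * J + J := by rw [hs]; ring
      omega
    have := hinj (a * J) (b * J) (hbnd a ha) (hbnd b hb) hab
    exact Nat.eq_of_mul_eq_mul_right (by omega) this
  · -- j ≥ 1 case
    intro j hj1 hj2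
    rw [Finset.card_image_of_injOn, Finset.card_range]
    have key : ∀ a b : ℕ, a < m → b < m → 2 * j + (a * J + b * J) = m * J → False := by
      intro a b ha hb hab
      have h0 : (a + b) * J = a * J + b * J := by ring
      have h1 : (a + b) * J < m * J := by omega
      have h2 : a + b < m := lt_of_mul_lt_mul_right h1 (Nat.zero_le J)
      have h3 : (m - (a + b)) * J = m * J - (a + b) * J := Nat.sub_mul m (a + b) J
      have hc1 : 1 ≤ m - (a + b) := by omega
      have hc2 : m - (a + b) < 2 := by
        by_contra h
        push_neg at h
        have := Nat.mul_le_mul_right J h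
        omega
      -- so m - (a+b) = 1, hence J = 2*j, contradicting J odd
      have hceq : m - (a + b) = 1 := by omega
      rw [hceq, one_mul] at h3
      omega
    intro a ha b hb hab
    simp only [Finset.coe_range, Set.mem_Iio] at ha hb
    have hm1 : m * J = (m - 1) * J + J := by
      nth_rewrite 1 [show m = (m - 1) + 1 from by omega]
      ring
    have hxd : j + a * J < m * J := by
      have h1 : a * J ≤ (m - 1) * J := Nat.mul_le_mul_right J (by omega)
      omega
    have hyd : j + b * J < m * J := by
      have h1 : b * J ≤ (m - 1) * J := Nat.mul_le_mul_right J (by omega)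
      omega
    obtain ⟨xr, hxr1, hxr2, hxr3⟩ := hreduce (j + a * J) hxd
    obtain ⟨yr, hyr1, hyr2, hyr3⟩ := hreduce (j + b * J) hyd
    have heq : xr = yr := by
      apply hinj _ _ hxr1 hyr1
      rw [← hxr2, ← hyr2]
      exact hab
    have haeqb : a * J = b * J := by
      rcases hxr3 with h | h <;> rcases hyr3 with h' | h'
      · omega
      · exact absurd (by omega : 2 * j + (a * J + b * J) = m * J) (fun hh => key a b ha hb hh)
      · exact absurd (by omega : 2 * j + (a * J + b * J) = m * J) (fun hh => key a b ha hb hh)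
      · omega
    exact Nat.eq_of_mul_eq_mul_right (by omega) haeqb
end

section
/- If s_ℓ = sum_{t=1}^{r} α_t λ_t^ℓ with λ_t pairwise distinct, nonzero, and α_t ≠ 0 for all t, and if c = (c_0,…,c_{r−1}) solves the Hankel linear system sum_{ℓ=0}^{r−1} c_ℓ s_{k+ℓ} = −s_{k+r} for k = 0,…,r−1, then c is unique and the monic polynomial p(λ) = λ^r + sum_{ℓ=0}^{r−1} c_ℓ λ^ℓ equals prod_{t=1}^{r}(λ − λ_t); in particular the root set of p is exactly {λ_1,…,λ_r}. -/
open Finset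

/-- If `s_ℓ = ∑_t α_t λ_t^ℓ` with distinct nonzero nodes and nonzero weights, and
`c` solves the Hankel linear system `∑_ℓ c_ℓ s_{k+ℓ} = -s_{k+r}` for `k = 0,…,r-1`,
then `c` is unique and `λ^r + ∑_ℓ c_ℓ λ^ℓ = ∏_t (λ - λ_t)`. -/
theorem prony_coefficients_unique (r : ℕ) (lam α : Fin r → ℂ)
    (hinj : Function.Injective lam) (hne : ∀ t, lam t ≠ 0) (hα : ∀ t, α t ≠ 0)
    (s : ℕ → ℂ) (hs : ∀ ℓ : ℕ, s ℓ = ∑ t, α t * lam t ^ ℓ)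
    (c : Fin r → ℂ)
    (hc : ∀ k : Fin r, ∑ ℓ : Fin r, c ℓ * s (k + ℓ) = - s (k + r)) :
    (∀ c' : Fin r → ℂ,
        (∀ k : Fin r, ∑ ℓ : Fin r, c' ℓ * s (k + ℓ) = - s (k + r)) → c' = c) ∧
      ∀ x : ℂ, x ^ r + ∑ ℓ : Fin r, c ℓ * x ^ (ℓ : ℕ) = ∏ t, (x - lam t) := by
  classical
  -- The Hankel matrix
  set H : Matrix (Fin r) (Fin r) ℂ := fun k ℓ => s (k + ℓ) with hHdef
  have hdetV : (Matrix.vandermonde lam).det ≠ 0 := by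
    rw [Matrix.det_vandermonde]
    refine Finset.prod_ne_zero_iff.2 fun i _ => Finset.prod_ne_zero_iff.2 fun j hj => ?_
    have hij : i < j := Finset.mem_Ioi.1 hj
    exact sub_ne_zero.2 fun h => absurd (hinj h) hij.ne'
  have hfac : H = (Matrix.vandermonde lam).transpose * Matrix.diagonal α * Matrix.vandermonde lam := by
    ext k ℓ
    simp [Matrix.mul_apply, Matrix.diagonal, Matrix.vandermonde, hs, pow_add,
      Finset.sum_ite_eq', hHdef]
    ring_nf
    apply Finset.sum_congr rfl
    intro t _
    ring
  have hdetH : H.det ≠ 0 := by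
    rw [hfac, Matrix.det_mul, Matrix.det_mul, Matrix.det_transpose, Matrix.det_diagonal]
    exact mul_ne_zero (mul_ne_zero hdetV (Finset.prod_ne_zero_iff.2 fun t _ => hα t)) hdetV
  -- uniqueness
  have huniq : ∀ c' : Fin r → ℂ,
      (∀ k : Fin r, ∑ ℓ : Fin r, c' ℓ * s (k + ℓ) = - s (k + r)) → c' = c := by
    intro c' hc'
    have h0 : H.mulVec (c' - c) = 0 := by
      funext k
      simp only [Matrix.mulVec, dotProduct, Pi.sub_apply, Pi.zero_apply, hHdef]
      have : ∑ ℓ : Fin r, s (↑k + ↑ℓ) * (c' ℓ - c ℓ)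
          = (∑ ℓ : Fin r, c' ℓ * s (↑k + ↑ℓ)) - ∑ ℓ : Fin r, c ℓ * s (↑k + ↑ℓ) := by
        rw [← Finset.sum_sub_distrib]; apply Finset.sum_congr rfl; intros; ring
      rw [this, hc' k, hc k, sub_self]
    have := Matrix.eq_zero_of_mulVec_eq_zero hdetH h0
    funext ℓ
    have := congrFun this ℓ
    simpa [sub_eq_zero] using this
  refine ⟨huniq, ?_⟩
  -- the explicit solution from the polynomial ∏ (X - λ_t)
  set p : Polynomial ℂ := ∏ t, (Polynomial.X - Polynomial.C (lam t)) with hpdef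
  have hmonic : p.Monic := Polynomial.monic_prod_of_monic _ _ fun t _ =>
    Polynomial.monic_X_sub_C _
  have hdeg : p.natDegree = r := by
    rw [hpdef, Polynomial.natDegree_prod _ _ fun t _ => Polynomial.X_sub_C_ne_zero _]
    simp
  set c₀ : Fin r → ℂ := fun ℓ => p.coeff ℓ with hc₀def
  have heval : ∀ x : ℂ, x ^ r + ∑ ℓ : Fin r, c₀ ℓ * x ^ (ℓ : ℕ) = ∏ t, (x - lam t) := by
    intro x
    have h1 : p.eval x = ∏ t, (x - lam t) := by
      rw [hpdef, Polynomial.eval_prod]; simp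
    have h2 : p.eval x = ∑ i ∈ Finset.range (r + 1), p.coeff i * x ^ i := by
      rw [Polynomial.eval_eq_sum_range, hdeg]
    have h3 : p.coeff r = 1 := by
      have := hmonic.coeff_natDegree
      rwa [hdeg] at this
    rw [← h1, h2, Finset.sum_range_succ, h3, one_mul, add_comm,
      Fin.sum_univ_eq_sum_range (fun ℓ => p.coeff ℓ * x ^ ℓ) r]
  have hroot : ∀ t, (lam t) ^ r + ∑ ℓ : Fin r, c₀ ℓ * lam t ^ (ℓ : ℕ) = 0 := by
    intro t
    rw [heval]
    exact Finset.prod_eq_zero (Finset.mem_univ t) (sub_self _)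
  have hsol : ∀ k : Fin r, ∑ ℓ : Fin r, c₀ ℓ * s (k + ℓ) = - s (k + r) := by
    intro k
    have : ∑ ℓ : Fin r, c₀ ℓ * s (↑k + ↑ℓ)
        = ∑ t, α t * lam t ^ (k : ℕ) * (∑ ℓ : Fin r, c₀ ℓ * lam t ^ (ℓ : ℕ)) := by
      simp only [hs, Finset.mul_sum]
      rw [Finset.sum_comm]
      apply Finset.sum_congr rfl
      intro t _
      apply Finset.sum_congr rfl
      intro ℓ _
      rw [pow_add]; ring
    rw [this, hs]
    rw [← neg_eq_iff_eq_neg, ← Finset.sum_neg_distrib]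
    apply Finset.sum_congr rfl
    intro t _
    have h := hroot t
    have : ∑ ℓ : Fin r, c₀ ℓ * lam t ^ (ℓ : ℕ) = - lam t ^ r := by linear_combination h
    rw [this, pow_add]; ring
  have hcc : c₀ = c := huniq c₀ hsol
  intro x
  rw [← hcc]
  exact heval x
end

section
/- Suppose two sequences s and s' are both mixtures of at most r geometric terms: s_ℓ = sum_{t=1}^r α_t λ_t^ℓ and s'_ℓ = sum_{t=1}^r α'_t (λ'_t)^ℓ, with each family of nodes pairwise distinct, nonzero, and all coefficients nonzero. If s_ℓ = s'_ℓ for all ℓ = 0, 1, …, 2r−1, then {(λ_t, α_t)} = {(λ'_t, α'_t)} as multisets (i.e., the nodes and coefficients are uniquely determined by the first 2r samples). -/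
open Finset

/-- If a weight function on a finite set of complex numbers has all power sums
(up to the cardinality) equal to zero, then it vanishes on the set. -/
lemma prony_aux_zero (S : Finset ℂ) (c : ℂ → ℂ)
    (h : ∀ ℓ < S.card, ∑ x ∈ S, c x * x ^ ℓ = 0) : ∀ x ∈ S, c x = 0 := by
  classical
  set n := S.card with hn
  set e : Fin n → ℂ := fun i => ((S.equivFin.symm i : S) : ℂ) with he
  have hei : Function.Injective e := by
    intro i j hij
    have := Subtype.coe_injective hij
    exact S.equivFin.symm.injective this
  have hsum : ∀ ℓ : Fin n, ∑ i : Fin n, (c ∘ e) i * e i ^ (ℓ : ℕ) = 0 := by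
    intro ℓ
    have hS : ∑ x ∈ S, c x * x ^ (ℓ : ℕ) = 0 := h ℓ ℓ.isLt
    rw [← hS]
    rw [← Finset.sum_attach S (fun x => c x * x ^ (ℓ : ℕ))]
    exact (Equiv.sum_comp S.equivFin.symm (fun x => c (x : ℂ) * (x : ℂ) ^ (ℓ : ℕ))).symm ▸ rfl
  have hz : (c ∘ e) = 0 :=
    Matrix.eq_zero_of_forall_pow_sum_mul_pow_eq_zero hei hsum
  intro x hx
  have : e (S.equivFin ⟨x, hx⟩) = x := by simp [he]
  have := congrFun hz (S.equivFin ⟨x, hx⟩)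
  simpa [this, Function.comp, ‹e (S.equivFin ⟨x, hx⟩) = x›] using this

/-- Prony identifiability: two mixtures of `r` geometric sequences with pairwise
distinct nonzero nodes and nonzero weights that agree on the first `2r` samples
have the same multiset of (node, weight) pairs. -/
theorem prony_identifiability (r : ℕ) (lam lam' α α' : Fin r → ℂ)
    (hinj : Function.Injective lam) (hinj' : Function.Injective lam')
    (hne : ∀ t, lam t ≠ 0) (hne' : ∀ t, lam' t ≠ 0)
    (hα : ∀ t, α t ≠ 0) (hα' : ∀ t, α' t ≠ 0)
    (h : ∀ ℓ < 2 * r, ∑ t, α t * lam t ^ ℓ = ∑ t, α' t * lam' t ^ ℓ) :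
    Multiset.map (fun t => (lam t, α t)) Finset.univ.val
      = Multiset.map (fun t => (lam' t, α' t)) Finset.univ.val := by
  classical
  set S : Finset ℂ := (univ.image lam) ∪ (univ.image lam') with hS
  have hcard : S.card ≤ 2 * r := by
    calc S.card ≤ (univ.image lam).card + (univ.image lam').card := Finset.card_union_le _ _
    _ ≤ r + r := by
        gcongr <;> simpa using (Finset.card_image_le.trans (by simp))
    _ = 2 * r := by ring
  set A : ℂ → ℂ := fun x => ∑ t ∈ univ.filter (fun t => lam t = x), α t with hA
  set B : ℂ → ℂ := fun x => ∑ t ∈ univ.filter (fun t => lam' t = x), α' t with hB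
  set c : ℂ → ℂ := fun x => A x - B x with hc
  have hAsum : ∀ ℓ : ℕ, ∑ x ∈ S, A x * x ^ ℓ = ∑ t, α t * lam t ^ ℓ := by
    intro ℓ
    have key : ∑ x ∈ S, A x * x ^ ℓ
        = ∑ x ∈ S, ∑ t ∈ univ.filter (fun t => lam t = x), α t * lam t ^ ℓ := by
      refine Finset.sum_congr rfl fun x _ => ?_
      simp only [hA, Finset.sum_mul]
      exact Finset.sum_congr rfl fun t ht => by rw [(Finset.mem_filter.mp ht).2]
    rw [key]
    exact Finset.sum_fiberwise_of_maps_to (fun t _ => by simp [hS]) _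
  have hBsum : ∀ ℓ : ℕ, ∑ x ∈ S, B x * x ^ ℓ = ∑ t, α' t * lam' t ^ ℓ := by
    intro ℓ
    have key : ∑ x ∈ S, B x * x ^ ℓ
        = ∑ x ∈ S, ∑ t ∈ univ.filter (fun t => lam' t = x), α' t * lam' t ^ ℓ := by
      refine Finset.sum_congr rfl fun x _ => ?_
      simp only [hB, Finset.sum_mul]
      exact Finset.sum_congr rfl fun t ht => by rw [(Finset.mem_filter.mp ht).2]
    rw [key]
    exact Finset.sum_fiberwise_of_maps_to (fun t _ => by simp [hS]) _
  have hc0 : ∀ x ∈ S, c x = 0 := by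
    apply prony_aux_zero
    intro ℓ hℓ
    have hℓ' : ℓ < 2 * r := lt_of_lt_of_le hℓ hcard
    simp only [hc, sub_mul, Finset.sum_sub_distrib, hAsum, hBsum, h ℓ hℓ', sub_self]
  -- compute A and B at node points
  have hAlam : ∀ t, A (lam t) = α t := by
    intro t
    have hf : univ.filter (fun t' => lam t' = lam t) = {t} := by
      ext u; simp [hinj.eq_iff]
    simp [hA, hf]
  have hBlam' : ∀ t, B (lam' t) = α' t := by
    intro t
    have hf : univ.filter (fun t' => lam' t' = lam' t) = {t} := by
      ext u; simp [hinj'.eq_iff]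
    simp [hB, hf]
  have hfwd : ∀ t, ∃ t', lam' t' = lam t ∧ α' t' = α t := by
    intro t
    have hxS : lam t ∈ S := by simp [hS]
    have hct := hc0 _ hxS
    rw [hc] at hct
    have hAB : A (lam t) = B (lam t) := by linear_combination hct
    rw [hAlam] at hAB
    by_cases hex : ∃ t', lam' t' = lam t
    · obtain ⟨t', ht'⟩ := hex
      refine ⟨t', ht', ?_⟩
      rw [← ht'] at hAB
      rw [hBlam'] at hAB
      exact hAB.symm
    · exfalso
      apply hα t
      have hf : univ.filter (fun u => lam' u = lam t) = ∅ :=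
        Finset.filter_false_of_mem (fun u _ hu => hex ⟨u, hu⟩)
      rw [hAB]
      simp [hB, hf]
  have hbwd : ∀ t, ∃ t', lam t' = lam' t ∧ α t' = α' t := by
    intro t
    have hxS : lam' t ∈ S := by simp [hS]
    have hct := hc0 _ hxS
    rw [hc] at hct
    have hAB : A (lam' t) = B (lam' t) := by linear_combination hct
    rw [hBlam'] at hAB
    by_cases hex : ∃ t', lam t' = lam' t
    · obtain ⟨t', ht'⟩ := hex
      refine ⟨t', ht', ?_⟩
      rw [← ht'] at hAB
      rw [hAlam] at hAB
      exact hAB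
    · exfalso
      apply hα' t
      have hf : univ.filter (fun u => lam u = lam' t) = ∅ :=
        Finset.filter_false_of_mem (fun u _ hu => hex ⟨u, hu⟩)
      rw [← hAB]
      simp [hA, hf]
  -- multiset equality via nodup + same membership
  have hnd1 : (Multiset.map (fun t => (lam t, α t)) Finset.univ.val).Nodup := by
    refine Multiset.Nodup.map ?_ Finset.univ.nodup
    intro a b hab
    exact hinj (congrArg Prod.fst hab)
  have hnd2 : (Multiset.map (fun t => (lam' t, α' t)) Finset.univ.val).Nodup := by
    refine Multiset.Nodup.map ?_ Finset.univ.nodup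
    intro a b hab
    exact hinj' (congrArg Prod.fst hab)
  rw [Multiset.Nodup.ext hnd1 hnd2]
  intro p
  simp only [Multiset.mem_map, Finset.mem_val, Finset.mem_univ, true_and]
  constructor
  · rintro ⟨t, rfl⟩
    obtain ⟨t', h1, h2⟩ := hfwd t
    exact ⟨t', by rw [h1, h2]⟩
  · rintro ⟨t, rfl⟩
    obtain ⟨t', h1, h2⟩ := hbwd t
    exact ⟨t', by rw [h1, h2]⟩
end
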